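/- Let θ be a non-constant inner function. For orthonormal sets {u_i}, {v_i} in H², the kernel of R_n = H_{θ̄} + Σ_{i=1}^n ⟨·, u_i⟩ v_i is almost shift invariant with defect at most 2n, and the defect space is contained in span{ H_{θ̆}(S* v_i), P_{θH²}(u_i) − ⟨P_{θH²}(u_i)/θ, 1⟩ θ : i = 1,…,n }. -/

import Mathlib

noncomputable section

open MeasureTheory Complex
open scoped ENNReal ComplexConjugate

namespace Hardy

instance fact_one_pos : Fact ((0:ℝ) < 1) := ⟨one_pos⟩
instance fact_one_le_top : Fact ((1:ℝ≥0∞) ≤ ∞) := ⟨le_top⟩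

/-- The unit circle, modelled additively as `ℝ/ℤ`. -/
abbrev Circ := AddCircle (1 : ℝ)
/-- Normalized Haar (arc-length) measure on the circle. -/
abbrev μT : Measure Circ := AddCircle.haarAddCircle
/-- The Lebesgue space `L²(𝕋)`. -/
abbrev L2 : Type := Lp ℂ 2 μT
/-- The space `L^∞(𝕋)`. -/
abbrev Linf : Type := Lp ℂ ⊤ μT

/-- Multiplication of an `L²` function by an `L^∞` function. -/
def mul (φ : Linf) (f : L2) : L2 :=
  MemLp.toLp ((φ : Circ → ℂ) • (f : Circ → ℂ))
    ((Lp.memLp f).smul (Lp.memLp φ))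

/-- Multiplication in `L^∞`. -/
def mulInf (φ ψ : Linf) : Linf :=
  MemLp.toLp ((φ : Circ → ℂ) • (ψ : Circ → ℂ))
    ((Lp.memLp ψ).smul (Lp.memLp φ))

/-- Complex conjugation on `L^∞`. -/
def conjInf (φ : Linf) : Linf :=
  MemLp.toLp (fun x => conj ((φ : Circ → ℂ) x))
    (Complex.isometry_conj.lipschitz.comp_memLp (map_zero _) (Lp.memLp φ))

/-- Negation on the circle preserves Haar measure. -/
lemma negMP : MeasurePreserving (fun x : Circ => -x) μT μT :=
  Measure.measurePreserving_neg μT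

/-- The flip operator `J` on `L²`: `(Jf)(ξ) = f(ξ̄)`, i.e. `x ↦ f(-x)`. -/
def J (f : L2) : L2 := Lp.compMeasurePreserving (fun x : Circ => -x) negMP f

/-- The flip operator on `L^∞`. -/
def Jinf (φ : Linf) : Linf := Lp.compMeasurePreserving (fun x : Circ => -x) negMP φ

/-- The Hardy space `H²`, the closed span of the nonnegative Fourier modes in `L²`. -/
def H2 : Submodule ℂ L2 :=
  (Submodule.span ℂ (Set.range fun n : ℕ => (fourierLp 2 (n : ℤ) : L2))).topologicalClosure

instance : CompleteSpace H2 :=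
  @IsClosed.completeSpace_coe _ _ _ _ (Submodule.isClosed_topologicalClosure _)

/-- The Riesz (orthogonal) projection `P : L² → H²` (viewed as a map into `L²`). -/
def P (f : L2) : L2 := (H2.orthogonalProjectionOnto f : L2)

/-- The `n`-th Fourier coefficient of `f ∈ L²`.  For `f ∈ H²`, `coeff f 0 = f(0)`,
the value at the origin of the holomorphic extension. -/
def coeff (f : L2) (n : ℤ) : ℂ := inner ℂ ((fourierLp 2 n : L2)) f

/-- The `H²` inner product (inherited from `L²`), conjugate-linear in the first slot. -/
def ip (f g : L2) : ℂ := inner ℂ f g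

/-- The symbol `z` as an element of `L^∞`. -/
def zsym : Linf := fourierLp ⊤ 1
/-- The symbol `z̄` as an element of `L^∞`. -/
def zbar : Linf := fourierLp ⊤ (-1)

/-- The unilateral (forward) shift `S` on `L²` (restricting to `H²`): `f ↦ z f`. -/
def shift (f : L2) : L2 := mul zsym f
/-- The backward shift `S* = T_{z̄}` on `H²`: `f ↦ P(z̄ f)`. -/
def bshift (f : L2) : L2 := P (mul zbar f)

/-- The Toeplitz operator `T_φ f = P(φ f)`. -/
def toep (φ : Linf) (f : L2) : L2 := P (mul φ f)
/-- The Hankel operator `H_φ f = P J(φ f)`. -/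
def hank (φ : Linf) (f : L2) : L2 := P (J (mul φ f))

/-- The constant function `1` in `L²`. -/
def one2 : L2 := fourierLp 2 0
/-- The canonical image of an `L^∞` function in `L²`. -/
def toL2 (φ : Linf) : L2 := mul φ one2

/-- `φ ∈ L^∞` belongs to `H^∞`, i.e. multiplication by `φ` preserves `H²`. -/
def IsHinf (φ : Linf) : Prop := ∀ f ∈ H2, mul φ f ∈ H2

/-- `θ` is an inner function: `θ ∈ H^∞` and `|θ| = 1` a.e. on the circle. -/
def IsInner (θ : Linf) : Prop :=
  IsHinf θ ∧ ∀ᵐ x ∂μT, ‖(θ : Circ → ℂ) x‖ = 1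

/-- `θ` is non-constant (as an a.e.-defined function). -/
def NonConst (θ : Linf) : Prop := ¬ ∃ c : ℂ, (θ : Circ → ℂ) =ᵐ[μT] fun _ => c

/-- The shift-invariant subspace `θH² = {θ g : g ∈ H²}`. -/
def thetaH2 (θ : Linf) : Set L2 := {g | ∃ f ∈ H2, g = mul θ f}

end Hardy

namespace Hardy

/-- The kernel of the `n`-rank perturbed Hankel operator
`R_n h = H_φ h + ∑ ⟨h, uᵢ⟩ vᵢ`, as a subset of `H²`. -/
def kerR (φ : Linf) {n : ℕ} (u v : Fin n → L2) : Set L2 :=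
  {h | h ∈ H2 ∧ hank φ h + ∑ i, ip (u i) h • v i = 0}

end Hardy

namespace Hardy

open scoped RealInnerProductSpace

local notation "⟪" x ", " y "⟫" => @inner ℂ L2 _ x y

/-! ### Pointwise (a.e.) descriptions of the basic operations -/

lemma mul_coeFn (φ : Linf) (f : L2) :
    (mul φ f : Circ → ℂ) =ᵐ[μT] fun x => (φ : Circ → ℂ) x * (f : Circ → ℂ) x := by
  filter_upwards [MemLp.coeFn_toLp (((Lp.memLp f).smul (Lp.memLp φ)) :
    MemLp ((φ : Circ → ℂ) • (f : Circ → ℂ)) 2 μT)] with x hx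
  exact hx

lemma J_coeFn (f : L2) : (J f : Circ → ℂ) =ᵐ[μT] fun x => (f : Circ → ℂ) (-x) :=
  Lp.coeFn_compMeasurePreserving f negMP

lemma conjInf_coeFn (φ : Linf) :
    (conjInf φ : Circ → ℂ) =ᵐ[μT] fun x => conj ((φ : Circ → ℂ) x) :=
  MemLp.coeFn_toLp _

lemma ae_comp_neg {g g' : Circ → ℂ} (h : g =ᵐ[μT] g') :
    (fun x : Circ => g (-x)) =ᵐ[μT] fun x => g' (-x) :=
  negMP.quasiMeasurePreserving.ae_eq_comp h

/-! ### Fourier coefficients -/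

lemma coeff_def' (f : L2) (n : ℤ) : coeff f n = fourierCoeff (f : Circ → ℂ) n := by
  rw [coeff, ← fourierBasis_repr, fourierBasis.repr_apply_apply, coe_fourierBasis]

lemma coeff_ext {f g : L2} (h : ∀ n, coeff f n = coeff g n) : f = g := by
  apply fourierBasis.repr.injective
  apply lp.ext
  funext m
  rw [fourierBasis_repr, fourierBasis_repr, ← coeff_def', ← coeff_def']
  exact h m

lemma fourierCoeff_congr_ae {f g : Circ → ℂ} (h : f =ᵐ[μT] g) (n : ℤ) :
    fourierCoeff f n = fourierCoeff g n := by
  unfold fourierCoeff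
  exact integral_congr_ae (h.mono fun x hx => by dsimp only; rw [hx])

lemma fourier_neg_arg {n : ℤ} (x : Circ) : fourier n (-x) = fourier (-n) x := by
  rw [fourier_apply, fourier_apply, smul_neg, ← neg_smul]

lemma coeff_congr_ae {f : L2} {g : Circ → ℂ} (h : (f : Circ → ℂ) =ᵐ[μT] g) (n : ℤ) :
    coeff f n = fourierCoeff g n := by
  rw [coeff_def']; exact fourierCoeff_congr_ae h n

lemma coeff_J (f : L2) (n : ℤ) : coeff (J f) n = coeff f (-n) := by
  rw [coeff_congr_ae (J_coeFn f) n, coeff_def']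
  unfold fourierCoeff
  have hemb : MeasurableEmbedding (fun x : Circ => -x) :=
    (MeasurableEquiv.neg Circ).measurableEmbedding
  rw [← MeasurePreserving.integral_comp negMP hemb
    (fun y : Circ => fourier (-(-n)) y • (f : Circ → ℂ) y)]
  refine integral_congr_ae (Filter.Eventually.of_forall fun x => ?_)
  simp only [neg_neg]
  rw [← fourier_neg_arg (n := n) x]

lemma coeff_mul_fourier (m : ℤ) (f : L2) (n : ℤ) :
    coeff (mul (fourierLp ⊤ m) f) n = coeff f (n - m) := by
  have h1 : (mul (fourierLp ⊤ m) f : Circ → ℂ) =ᵐ[μT]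
      fun x => fourier m x * (f : Circ → ℂ) x := by
    filter_upwards [mul_coeFn (fourierLp ⊤ m) f, coeFn_fourierLp ⊤ m] with x hx hy
    rw [hx, hy]
  rw [coeff_congr_ae h1 n, coeff_def']
  unfold fourierCoeff
  refine integral_congr_ae (Filter.Eventually.of_forall fun x => ?_)
  simp only [smul_eq_mul, ← mul_assoc]
  congr 1
  rw [← fourier_add]
  congr 1
  ring_nf

end Hardy

namespace Hardy

/-! ### Coefficient arithmetic -/

lemma coeff_add (f g : L2) (n : ℤ) : coeff (f + g) n = coeff f n + coeff g n :=
  inner_add_right _ _ _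

lemma coeff_sub (f g : L2) (n : ℤ) : coeff (f - g) n = coeff f n - coeff g n :=
  inner_sub_right _ _ _

lemma coeff_smul (c : ℂ) (f : L2) (n : ℤ) : coeff (c • f) n = c * coeff f n :=
  inner_smul_right _ _ _

lemma coeff_zero (n : ℤ) : coeff (0 : L2) n = 0 := inner_zero_right _

lemma coeff_fourierLp (m n : ℤ) : coeff (fourierLp 2 m : L2) n = if n = m then 1 else 0 := by
  rw [coeff, orthonormal_iff_ite.mp orthonormal_fourier]

/-! ### The Hardy space via coefficients -/

lemma fourierLp_mem_H2 {n : ℤ} (hn : 0 ≤ n) : (fourierLp 2 n : L2) ∈ H2 := by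
  apply Submodule.le_topologicalClosure
  apply Submodule.subset_span
  exact ⟨n.toNat, by simp [Int.toNat_of_nonneg hn]⟩

lemma one2_mem_H2 : one2 ∈ H2 := fourierLp_mem_H2 le_rfl

lemma coeff_zero_of_neg {f : L2} (hf : f ∈ H2) {n : ℤ} (hn : n < 0) : coeff f n = 0 := by
  have hle : H2 ≤ LinearMap.ker ((innerSL ℂ (fourierLp 2 n : L2)) : L2 →ₗ[ℂ] ℂ) := by
    apply Submodule.topologicalClosure_minimal
    · rw [Submodule.span_le]
      rintro x ⟨k, rfl⟩
      simp only [SetLike.mem_coe, LinearMap.mem_ker, ContinuousLinearMap.coe_coe]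
      have : (innerSL ℂ (fourierLp 2 n : L2)) (fourierLp 2 (k : ℤ) : L2)
          = @inner ℂ L2 _ (fourierLp 2 n : L2) (fourierLp 2 (k : ℤ)) := rfl
      rw [this, orthonormal_iff_ite.mp orthonormal_fourier]
      have : n ≠ (k : ℤ) := by omega
      simp [this]
    · exact ContinuousLinearMap.isClosed_ker _
  exact hle hf

lemma mem_H2_of_coeff {f : L2} (h : ∀ n < 0, coeff f n = 0) : f ∈ H2 := by
  have hs := fourierBasis.hasSum_repr f
  have hmem : ∀ s : Finset ℤ, (∑ i ∈ s, fourierBasis.repr f i • fourierBasis i) ∈ H2 := by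
    intro s
    refine Submodule.sum_mem _ fun i _ => ?_
    rcases lt_or_ge i 0 with hi | hi
    · have hz : fourierBasis.repr f i = 0 := by
        rw [fourierBasis_repr, ← coeff_def']; exact h i hi
      simp [hz]
    · refine Submodule.smul_mem _ _ ?_
      have : (fourierBasis (T := 1) i : L2) = fourierLp 2 i := by
        rw [← coe_fourierBasis]
      rw [this]
      exact fourierLp_mem_H2 hi
  have hcl : IsClosed (H2 : Set L2) := Submodule.isClosed_topologicalClosure _
  exact hcl.mem_of_tendsto hs (Filter.Eventually.of_forall hmem)

/-! ### Coefficients of the projection and shifts -/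

lemma P_mem (f : L2) : P f ∈ H2 := (H2.orthogonalProjectionOnto f).2

lemma P_of_mem {f : L2} (hf : f ∈ H2) : P f = f := by
  unfold P
  exact Submodule.starProjection_eq_self_iff.mpr hf

lemma coeff_P (f : L2) (n : ℤ) : coeff (P f) n = if 0 ≤ n then coeff f n else 0 := by
  split_ifs with hn
  · have horth := Submodule.sub_starProjection_mem_orthogonal (K := H2) f
    have hz := (Submodule.mem_orthogonal _ _).mp horth _ (fourierLp_mem_H2 hn)
    have : coeff (f - P f) n = 0 := hz
    rw [coeff_sub] at this
    linear_combination -this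
  · exact coeff_zero_of_neg (P_mem f) (not_le.mp hn)

lemma coeff_shift (f : L2) (n : ℤ) : coeff (shift f) n = coeff f (n - 1) := by
  unfold shift zsym
  exact coeff_mul_fourier 1 f n

lemma coeff_mul_zbar (f : L2) (n : ℤ) : coeff (mul zbar f) n = coeff f (n + 1) := by
  unfold zbar
  rw [coeff_mul_fourier (-1) f n, sub_neg_eq_add]

lemma coeff_bshift (f : L2) (n : ℤ) :
    coeff (bshift f) n = if 0 ≤ n then coeff f (n + 1) else 0 := by
  unfold bshift
  rw [coeff_P, coeff_mul_zbar]

lemma shift_mem_H2 {f : L2} (hf : f ∈ H2) : shift f ∈ H2 := by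
  refine mem_H2_of_coeff fun n hn => ?_
  rw [coeff_shift]
  exact coeff_zero_of_neg hf (by omega)

lemma bshift_mem_H2 (f : L2) : bshift f ∈ H2 := P_mem _

end Hardy

namespace Hardy

/-! ### Algebraic identities for `mul` and `J` -/

lemma mul_add' (φ : Linf) (f g : L2) : mul φ (f + g) = mul φ f + mul φ g := by
  apply Lp.ext
  filter_upwards [mul_coeFn φ (f + g), mul_coeFn φ f, mul_coeFn φ g,
    Lp.coeFn_add f g, Lp.coeFn_add (mul φ f) (mul φ g)] with x h1 h2 h3 h4 h5
  rw [h1, h5, Pi.add_apply, h2, h3, h4, Pi.add_apply]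
  ring

lemma mul_smul' (φ : Linf) (c : ℂ) (f : L2) : mul φ (c • f) = c • mul φ f := by
  apply Lp.ext
  filter_upwards [mul_coeFn φ (c • f), mul_coeFn φ f,
    Lp.coeFn_smul c f, Lp.coeFn_smul c (mul φ f)] with x h1 h2 h3 h4
  rw [h1, h4, Pi.smul_apply, h2, h3, Pi.smul_apply, smul_eq_mul, smul_eq_mul]
  ring

lemma mul_sub' (φ : Linf) (f g : L2) : mul φ (f - g) = mul φ f - mul φ g := by
  apply Lp.ext
  filter_upwards [mul_coeFn φ (f - g), mul_coeFn φ f, mul_coeFn φ g,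
    Lp.coeFn_sub f g, Lp.coeFn_sub (mul φ f) (mul φ g)] with x h1 h2 h3 h4 h5
  rw [h1, h5, Pi.sub_apply, h2, h3, h4, Pi.sub_apply]
  ring

lemma mul_mul_comm (φ ψ : Linf) (f : L2) : mul φ (mul ψ f) = mul ψ (mul φ f) := by
  apply Lp.ext
  filter_upwards [mul_coeFn φ (mul ψ f), mul_coeFn ψ f,
    mul_coeFn ψ (mul φ f), mul_coeFn φ f] with x h1 h2 h3 h4
  rw [h1, h2, h3, h4]
  ring

lemma conj_mul_self_eq_one {θ : Linf} (hθ : IsInner θ) :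
    ∀ᵐ x ∂μT, conj ((θ : Circ → ℂ) x) * (θ : Circ → ℂ) x = 1 := by
  filter_upwards [hθ.2] with x hx
  rw [mul_comm, Complex.mul_conj, Complex.normSq_eq_norm_sq]
  rw [hx]
  norm_num

lemma mul_conjInf_mul {θ : Linf} (hθ : IsInner θ) (f : L2) :
    mul (conjInf θ) (mul θ f) = f := by
  apply Lp.ext
  filter_upwards [mul_coeFn (conjInf θ) (mul θ f), mul_coeFn θ f,
    conjInf_coeFn θ, conj_mul_self_eq_one hθ] with x h1 h2 h3 h4
  rw [h1, h2, h3, ← mul_assoc, h4, one_mul]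

lemma mul_mul_conjInf {θ : Linf} (hθ : IsInner θ) (f : L2) :
    mul θ (mul (conjInf θ) f) = f := by
  apply Lp.ext
  filter_upwards [mul_coeFn θ (mul (conjInf θ) f), mul_coeFn (conjInf θ) f,
    conjInf_coeFn θ, conj_mul_self_eq_one hθ] with x h1 h2 h3 h4
  rw [h1, h2, h3, ← mul_assoc, mul_comm ((θ : Circ → ℂ) x), h4, one_mul]

lemma J_J (f : L2) : J (J f) = f := by
  apply Lp.ext
  have h2 := ae_comp_neg (J_coeFn f)
  filter_upwards [J_coeFn (J f), h2] with x h1 h2'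
  rw [h1, h2', neg_neg]

lemma J_mul_zsym (f : L2) : J (mul zsym f) = mul zbar (J f) := by
  apply Lp.ext
  unfold zsym zbar
  have h1 := ae_comp_neg (mul_coeFn (fourierLp ⊤ 1) f)
  have h2 := ae_comp_neg (coeFn_fourierLp (T := 1) ⊤ 1)
  filter_upwards [J_coeFn (mul (fourierLp ⊤ 1) f), h1, h2,
    mul_coeFn (fourierLp ⊤ (-1)) (J f),
    coeFn_fourierLp (T := 1) ⊤ (-1), J_coeFn f] with x hx1 hx2 hx3 hx4 hx5 hx6
  rw [hx1, hx2, hx3, hx4, hx5, hx6, fourier_neg_arg]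

lemma J_mul_Jinf (φ : Linf) (f : L2) : J (mul (Jinf φ) f) = mul φ (J f) := by
  apply Lp.ext
  have h1 := ae_comp_neg (mul_coeFn (Jinf φ) f)
  have h2 := ae_comp_neg (Lp.coeFn_compMeasurePreserving φ negMP :
    (Jinf φ : Circ → ℂ) =ᵐ[μT] fun x => (φ : Circ → ℂ) (-x))
  filter_upwards [J_coeFn (mul (Jinf φ) f), h1, h2, mul_coeFn φ (J f), J_coeFn f]
    with x hx1 hx2 hx3 hx4 hx5
  rw [hx1, hx2, hx4, hx5]
  have : (Jinf φ : Circ → ℂ) (-x) = (φ : Circ → ℂ) (-(-x)) := hx3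
  rw [this, neg_neg]

end Hardy

namespace Hardy

/-! ### Linear structure -/

def mulLM (φ : Linf) : L2 →ₗ[ℂ] L2 where
  toFun := mul φ
  map_add' := mul_add' φ
  map_smul' c f := mul_smul' φ c f

def JLM : L2 →ₗ[ℂ] L2 := Lp.compMeasurePreservingₗ ℂ (fun x : Circ => -x) negMP

def PLM : L2 →ₗ[ℂ] L2 := H2.subtype.comp (H2.orthogonalProjectionOnto).toLinearMap

lemma mulLM_apply (φ : Linf) (f : L2) : mulLM φ f = mul φ f := rfl
lemma JLM_apply (f : L2) : JLM f = J f := rfl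
lemma PLM_apply (f : L2) : PLM f = P f := rfl

def hankLM (φ : Linf) : L2 →ₗ[ℂ] L2 := PLM ∘ₗ JLM ∘ₗ mulLM φ

lemma hankLM_apply (φ : Linf) (f : L2) : hankLM φ f = hank φ f := rfl

def bshiftLM : L2 →ₗ[ℂ] L2 := PLM ∘ₗ mulLM zbar

lemma bshiftLM_apply (f : L2) : bshiftLM f = bshift f := rfl

/-! ### Hankel operator identities -/

lemma P_mul_zbar_P (x : L2) : P (mul zbar (P x)) = P (mul zbar x) := by
  apply coeff_ext
  intro n
  rw [coeff_P, coeff_P, coeff_mul_zbar, coeff_mul_zbar, coeff_P]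
  by_cases hn : 0 ≤ n
  · simp only [hn, if_true]
    have : (0 : ℤ) ≤ n + 1 := by omega
    simp [this]
  · simp [hn]

/-- The fundamental intertwining relation `H_φ S = S* H_φ`. -/
lemma hank_shift (φ : Linf) (f : L2) : hank φ (shift f) = bshift (hank φ f) := by
  show P (J (mul φ (mul zsym f))) = P (mul zbar (P (J (mul φ f))))
  rw [mul_mul_comm, J_mul_zsym, P_mul_zbar_P]

lemma hank_Jinf_eq (θ : Linf) (g : L2) : hank (Jinf θ) g = P (mul θ (J g)) := by
  show P (J (mul (Jinf θ) g)) = P (mul θ (J g))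
  rw [J_mul_Jinf]

/-- If all nonpositive coefficients vanish, the function is a forward shift. -/
lemma eq_shift_of_coeff_nonpos {x : L2} (h : ∀ n ≤ 0, coeff x n = 0) :
    x = shift (bshift x) ∧ bshift x ∈ H2 := by
  constructor
  · apply coeff_ext
    intro n
    rw [coeff_shift, coeff_bshift]
    by_cases hn : 0 ≤ n - 1
    · simp only [hn, if_true]
      congr 1
      omega
    · simp only [hn, if_false]
      exact h n (by omega)
  · exact bshift_mem_H2 x

lemma P_eq_zero_of_coeff {x : L2} (h : ∀ n, 0 ≤ n → coeff x n = 0) : P x = 0 := by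
  apply coeff_ext
  intro n
  rw [coeff_P, coeff_zero]
  by_cases hn : 0 ≤ n
  · simp [hn, h n hn]
  · simp [hn]

lemma J_sub (f g : L2) : J (f - g) = J f - J g := map_sub JLM f g

lemma hank_sub (φ : Linf) (f g : L2) : hank φ (f - g) = hank φ f - hank φ g :=
  map_sub (hankLM φ) f g

/-- The partial isometry property `H H* H = H` on `H²`, for `θ` inner. -/
lemma hank_hank_hank {θ : Linf} (hθ : IsInner θ) {x : L2} (hx : x ∈ H2) :
    hank (conjInf θ) (hank (Jinf θ) (hank (conjInf θ) x)) = hank (conjInf θ) x := by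
  have hHx : hank (conjInf θ) x = P (J (mul (conjInf θ) x)) := rfl
  set y : L2 := mul (conjInf θ) x with hy
  set ν : L2 := J y - P (J y) with hν
  have hνc : ∀ n, 0 ≤ n → coeff ν n = 0 := by
    intro n hn
    rw [hν, coeff_sub, coeff_P, if_pos hn, sub_self]
  have hJνc : ∀ n ≤ 0, coeff (J ν) n = 0 := fun n hn => by
    rw [coeff_J]; exact hνc (-n) (by omega)
  obtain ⟨hJν_eq, hw⟩ := eq_shift_of_coeff_nonpos hJνc
  have hmulθJν : mul θ (J ν) ∈ H2 := by
    have h1 : mul θ (J ν) = shift (mul θ (bshift (J ν))) := by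
      conv_lhs => rw [hJν_eq]
      exact mul_mul_comm θ zsym (bshift (J ν))
    rw [h1]
    exact shift_mem_H2 (hθ.1 _ hw)
  have hmid : hank (Jinf θ) (hank (conjInf θ) x) = x - mul θ (J ν) := by
    rw [hHx, hank_Jinf_eq]
    have h1 : P (J y) = J y - ν := by rw [hν, sub_sub_cancel]
    have h2 : J (P (J y)) = y - J ν := by
      rw [h1, J_sub, J_J]
    rw [h2, mul_sub', hy, mul_mul_conjInf hθ]
    exact P_of_mem (Submodule.sub_mem _ hx hmulθJν)
  rw [hmid, hank_sub]
  have hz : hank (conjInf θ) (mul θ (J ν)) = 0 := by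
    show P (J (mul (conjInf θ) (mul θ (J ν)))) = 0
    rw [mul_conjInf_mul hθ, J_J]
    exact P_eq_zero_of_coeff hνc
  rw [hz, sub_zero]

/-- Kernel representation: if `H_{θ̄} k = 0` with `k ∈ H²`, then `k = θ · (z g)`. -/
lemma ker_hank_rep {θ : Linf} (hθ : IsInner θ) {k : L2} (hk : hank (conjInf θ) k = 0) :
    ∃ g : L2, g ∈ H2 ∧ k = mul θ (shift g) := by
  set y : L2 := mul (conjInf θ) k with hy
  have hyc : ∀ n ≤ 0, coeff y n = 0 := by
    intro n hn
    have h0 : P (J y) = 0 := hk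
    have := congrArg (fun z => coeff z (-n)) h0
    simp only [coeff_P, coeff_zero] at this
    rw [if_pos (by omega : (0:ℤ) ≤ -n)] at this
    rw [← neg_neg n, ← coeff_J]
    exact this
  obtain ⟨hy_eq, hg⟩ := eq_shift_of_coeff_nonpos hyc
  refine ⟨bshift y, hg, ?_⟩
  have : mul θ y = k := mul_mul_conjInf hθ k
  rw [← this]
  conv_lhs => rw [hy_eq]

end Hardy

namespace Hardy

/-! ### Inner products -/

lemma inner_mul_mul {θ : Linf} (hθ : IsInner θ) (a b : L2) :
    (inner ℂ (mul θ a) (mul θ b) : ℂ) = inner ℂ a b := by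
  rw [MeasureTheory.L2.inner_def, MeasureTheory.L2.inner_def]
  apply integral_congr_ae
  filter_upwards [mul_coeFn θ a, mul_coeFn θ b, conj_mul_self_eq_one hθ] with x h1 h2 h3
  rw [h1, h2]
  simp only [RCLike.inner_apply, map_mul]
  rw [mul_comm ((θ : Circ → ℂ) x * _), mul_comm ((b : Circ → ℂ) x)]
  calc conj ((θ : Circ → ℂ) x) * conj ((a : Circ → ℂ) x)
        * ((θ : Circ → ℂ) x * (b : Circ → ℂ) x)
      = (conj ((θ : Circ → ℂ) x) * (θ : Circ → ℂ) x)
        * (conj ((a : Circ → ℂ) x) * (b : Circ → ℂ) x) := by ring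
    _ = conj ((a : Circ → ℂ) x) * (b : Circ → ℂ) x := by rw [h3, one_mul]

lemma inner_one2 (x : L2) : (inner ℂ one2 x : ℂ) = coeff x 0 := rfl

lemma hank_mem_H2 (φ : Linf) (f : L2) : hank φ f ∈ H2 := P_mem _

end Hardy

open Hardy

/-- for `φ = θ̄` with `θ` non-constant inner, `Ker Rₙ` is almost shift
invariant with defect at most `2n`, with defect space contained in
`span{H_{θ̆}(S* vᵢ), P_{θH²}(uᵢ) − ⟨P_{θH²}(uᵢ)/θ, 1⟩ θ}`. -/
theorem kerR_conj_inner_almost_shift_invariant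
    (n : ℕ) (θ : Linf) (hθ : IsInner θ) (hθc : NonConst θ)
    (u v : Fin n → L2) (hu : Orthonormal ℂ u) (hv : Orthonormal ℂ v)
    (huH : ∀ i, u i ∈ H2) (hvH : ∀ i, v i ∈ H2)
    (w q : Fin n → L2) (hq : ∀ i, q i ∈ H2) (hwq : ∀ i, w i = mul θ (q i))
    (hwp : ∀ i, ∀ x ∈ thetaH2 θ, ip x (u i - w i) = 0) :
    Module.finrank ℂ (Submodule.span ℂ
        ((Set.range fun i => hank (Jinf θ) (bshift (v i))) ∪
         (Set.range fun i => w i - coeff (q i) 0 • toL2 θ))) ≤ 2 * n ∧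
    ∀ h ∈ kerR (conjInf θ) u v,
      ∃ d ∈ Submodule.span ℂ
          ((Set.range fun i => hank (Jinf θ) (bshift (v i))) ∪
           (Set.range fun i => w i - coeff (q i) 0 • toL2 θ)),
        shift h - d ∈ kerR (conjInf θ) u v := by
  classical
  set E : Fin n → L2 := fun i => hank (Jinf θ) (bshift (v i)) with hE
  set F : Fin n → L2 := fun i => w i - coeff (q i) 0 • toL2 θ with hF
  -- the auxiliary functions pᵢ = qᵢ - qᵢ(0)
  set p : Fin n → L2 := fun i => q i - coeff (q i) 0 • one2 with hp
  have hpH2 : ∀ i, p i ∈ H2 := fun i =>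
    Submodule.sub_mem _ (hq i) (Submodule.smul_mem _ _ one2_mem_H2)
  have hpc0 : ∀ i, coeff (p i) 0 = 0 := by
    intro i
    simp only [hp, coeff_sub, coeff_smul]
    rw [show coeff one2 0 = 1 by rw [one2, coeff_fourierLp]; simp]
    ring
  have hq_eq : ∀ i, q i = p i + coeff (q i) 0 • one2 := by
    intro i; simp only [hp]; abel
  have hFp : ∀ i, F i = mul θ (p i) := by
    intro i
    simp only [hF, hp, hwq i]
    rw [mul_sub', mul_smul']
    rfl
  have hFH2 : ∀ i, F i ∈ H2 := fun i => (hFp i) ▸ hθ.1 _ (hpH2 i)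
  have hFtheta : ∀ i, F i ∈ thetaH2 θ := fun i => ⟨p i, hpH2 i, hFp i⟩
  have hhF : ∀ i, hank (conjInf θ) (F i) = 0 := by
    intro i
    rw [hFp i]
    show P (J (mul (conjInf θ) (mul θ (p i)))) = 0
    rw [mul_conjInf_mul hθ]
    apply P_eq_zero_of_coeff
    intro m hm
    rw [coeff_J]
    rcases eq_or_lt_of_le hm with he | hl
    · rw [← he, neg_zero]; exact hpc0 i
    · exact coeff_zero_of_neg (hpH2 i) (by omega)
  constructor
  · -- the dimension bound
    rw [show (Set.range fun i => hank (Jinf θ) (bshift (v i))) ∪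
        (Set.range fun i => w i - coeff (q i) 0 • toL2 θ)
        = Set.range (Sum.elim (fun i : Fin n => hank (Jinf θ) (bshift (v i)))
            (fun i : Fin n => w i - coeff (q i) 0 • toL2 θ)) from (Set.Sum.elim_range _ _).symm]
    have hcard := finrank_range_le_card (R := ℂ)
      (Sum.elim (fun i : Fin n => hank (Jinf θ) (bshift (v i)))
        (fun i : Fin n => w i - coeff (q i) 0 • toL2 θ))
    simpa [Set.finrank, two_mul] using hcard
  · intro h hker
    obtain ⟨hhH2, heq⟩ := hker
    set a : Fin n → ℂ := fun i => ip (u i) h with ha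
    have hker' : (∑ i, a i • v i) = - hank (conjInf θ) h :=
      eq_neg_of_add_eq_zero_left (by rw [add_comm]; exact heq)
    -- the corrected shift
    set k : L2 := shift h + ∑ i, a i • E i with hk
    have hkH2 : k ∈ H2 := by
      refine Submodule.add_mem _ (shift_mem_H2 hhH2) (Submodule.sum_mem _ fun i _ => ?_)
      exact Submodule.smul_mem _ _ (hank_mem_H2 _ _)
    have hhk : hank (conjInf θ) k = 0 := by
      have h1 : hank (conjInf θ) k
          = hank (conjInf θ) (shift h) + ∑ i, a i • hank (conjInf θ) (E i) := by
        rw [hk, ← hankLM_apply, map_add, map_sum]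
        simp only [_root_.map_smul, hankLM_apply]
      set T : L2 →ₗ[ℂ] L2 := hankLM (conjInf θ) ∘ₗ hankLM (Jinf θ) ∘ₗ bshiftLM with hT
      have hTap : ∀ x, T x = hank (conjInf θ) (hank (Jinf θ) (bshift x)) := fun x => rfl
      have h2 : ∑ i, a i • hank (conjInf θ) (E i) = T (∑ i, a i • v i) := by
        rw [map_sum]
        refine Finset.sum_congr rfl fun i _ => ?_
        rw [_root_.map_smul, hTap]
      rw [h1, h2, hker', map_neg, hTap, ← hank_shift,
        hank_hank_hank hθ (shift_mem_H2 hhH2)]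
      exact add_neg_cancel _
    obtain ⟨g, hgH2, hk_eq⟩ := ker_hank_rep hθ hhk
    -- the projection coefficients b
    haveI : FiniteDimensional ℂ (Submodule.span ℂ (Set.range p)) :=
      FiniteDimensional.span_of_finite ℂ (Set.finite_range p)
    set V : Submodule ℂ L2 := Submodule.span ℂ (Set.range p) with hV
    set π : L2 := (V.orthogonalProjectionOnto (shift g) : L2) with hπ
    have hπV : π ∈ V := (V.orthogonalProjectionOnto (shift g)).2
    obtain ⟨b, hb⟩ := (Submodule.mem_span_range_iff_exists_fun ℂ).mp hπV
    refine ⟨∑ i, (-(a i)) • E i + ∑ i, b i • F i, ?_, ?_⟩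
    · -- d lies in the defect span
      refine Submodule.add_mem _ (Submodule.sum_mem _ fun i _ => ?_)
        (Submodule.sum_mem _ fun i _ => ?_)
      · exact Submodule.smul_mem _ _ (Submodule.subset_span (Or.inl ⟨i, rfl⟩))
      · exact Submodule.smul_mem _ _ (Submodule.subset_span (Or.inr ⟨i, rfl⟩))
    · -- S h - d ∈ ker R
      have hSd : shift h - (∑ i, (-(a i)) • E i + ∑ i, b i • F i)
          = k - ∑ i, b i • F i := by
        have h4 : (∑ i, (-(a i)) • E i) = -(∑ i, a i • E i) := by
          simp only [neg_smul]
          exact Finset.sum_neg_distrib (f := fun i => a i • E i)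
        rw [h4, sub_add_eq_sub_sub, sub_neg_eq_add, hk]
      rw [hSd]
      have hmem : k - ∑ i, b i • F i ∈ H2 :=
        Submodule.sub_mem _ hkH2
          (Submodule.sum_mem _ fun i _ => Submodule.smul_mem _ _ (hFH2 i))
      -- the Hankel part vanishes
      have hhpart : hank (conjInf θ) (k - ∑ i, b i • F i) = 0 := by
        rw [hank_sub, hhk, ← hankLM_apply, map_sum]
        simp only [_root_.map_smul, hankLM_apply, hhF, smul_zero, Finset.sum_const_zero]
        simp
      -- the inner-product part vanishes
      have hktheta : k ∈ thetaH2 θ := ⟨shift g, shift_mem_H2 hgH2, hk_eq⟩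
      have hinner_w : ∀ (j : Fin n) (x : L2), x ∈ thetaH2 θ →
          (inner ℂ (u j) x : ℂ) = inner ℂ (w j) x := by
        intro j x hx
        have h0 : (inner ℂ x (u j - w j) : ℂ) = 0 := hwp j x hx
        rw [inner_sub_right, sub_eq_zero] at h0
        calc (inner ℂ (u j) x : ℂ) = conj (inner ℂ x (u j) : ℂ) := (inner_conj_symm _ _).symm
          _ = conj (inner ℂ x (w j) : ℂ) := by rw [h0]
          _ = inner ℂ (w j) x := inner_conj_symm _ _
      have hip0 : ∀ j, ip (u j) (k - ∑ i, b i • F i) = 0 := by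
        intro j
        show (inner ℂ (u j) (k - ∑ i, b i • F i) : ℂ) = 0
        rw [inner_sub_right, inner_sum]
        have huk : (inner ℂ (u j) k : ℂ) = inner ℂ (p j) (shift g) := by
          rw [hinner_w j k hktheta, hwq j, hk_eq, inner_mul_mul hθ, hq_eq j,
            inner_add_left, inner_smul_left, inner_one2, coeff_shift]
          rw [coeff_zero_of_neg hgH2 (by norm_num : (0:ℤ) - 1 < 0)]
          ring
        have huF : ∀ i, (inner ℂ (u j) (b i • F i) : ℂ) = b i * inner ℂ (p j) (p i) := by
          intro i
          rw [inner_smul_right, hinner_w j (F i) (hFtheta i), hwq j, hFp i,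
            inner_mul_mul hθ, hq_eq j, inner_add_left, inner_smul_left, inner_one2,
            hpc0 i]
          ring
        rw [huk]
        simp only [huF]
        have hsum : (∑ i, b i * (inner ℂ (p j) (p i) : ℂ)) = inner ℂ (p j) π := by
          rw [← hb, inner_sum]
          simp only [inner_smul_right]
        rw [hsum]
        rw [← inner_sub_right]
        have horth := Submodule.sub_starProjection_mem_orthogonal (K := V) (shift g)
        exact ((Submodule.mem_orthogonal _ _).mp horth) _
          (Submodule.subset_span ⟨j, rfl⟩)
      refine ⟨hmem, ?_⟩
      rw [hhpart]
      simp only [hip0, zero_smul, Finset.sum_const_zero, add_zero]
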